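/- arXiv:2306.09065 — 2 statements merged into one kernel-verified Lean document; each statement's English description precedes it below -/
import Mathlib

section
/- In the reduction from TSP to OMT, if for every stop m there exists a node k_m covered only at stop m (X_{k_m,m} = 1 and X_{k_m,m'} = 0 for all m' ≠ m), then any tour satisfying the coverage constraint Σ_i X_{k,m_i} ≥ 1 for all nodes k, together with the distinct-stops constraint, must visit every stop in M \ {0}; i.e., the number of visited stops M̂ equals |M| - 1. -/
/-- In the TSP→OMT reduction: if for every non-depot stop `m` there is a node covered only
at `m`, then any tour (a duplicate-free list `L` of non-depot stops) satisfying the coverage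
constraint must visit every non-depot stop, i.e. `L` contains every stop of `S \ {0}` and
has length `|S| - 1`. -/
theorem stmt_17 (S : Finset ℕ) (h0 : 0 ∈ S) {Node : Type*} (X : Node → ℕ → Bool)
    (L : List ℕ) (hnodup : L.Nodup) (hLS : ∀ m ∈ L, m ∈ S.erase 0)
    (hcov : ∀ k : Node, ∃ m ∈ L, X k m = true)
    (hspecial : ∀ m ∈ S.erase 0,
      ∃ k : Node, X k m = true ∧ ∀ m' : ℕ, m' ≠ m → X k m' = false) :
    (∀ m ∈ S.erase 0, m ∈ L) ∧ L.length = S.card - 1 := by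
  have hmem : ∀ m ∈ S.erase 0, m ∈ L := by
    intro m hm
    obtain ⟨k, hk1, hk2⟩ := hspecial m hm
    obtain ⟨m', hm'L, hm'X⟩ := hcov k
    by_cases h : m' = m
    · exact h ▸ hm'L
    · simp [hk2 m' h] at hm'X
  refine ⟨hmem, ?_⟩
  have h1 : L.toFinset = S.erase 0 := by
    apply Finset.Subset.antisymm
    · intro x hx; exact hLS x (List.mem_toFinset.mp hx)
    · intro x hx; exact List.mem_toFinset.mpr (hmem x hx)
  have := congrArg Finset.card h1
  rwa [List.toFinset_card_of_nodup hnodup, Finset.card_erase_of_mem h0] at this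
end

section
/- In step 1 of HSRC-M1 with T ≥ 2 types, if in a given block the outcome is not 'collision in every slot', then the set of types that transmitted in that block is uniquely determined by the slot outcomes. Specifically, with type 1 transmitting symbol α in all T-1 slots and type b ∈ {2,...,T} transmitting symbol β only in slot b-1: slot j ∈ {1,...,T-1} shows outcome E iff no type-1 and no type-(j+1) node transmitted; α iff exactly one type-1 node and no type-(j+1) node transmitted; β iff no type-1 node and exactly one type-(j+1) node transmitted; C otherwise — and from a full outcome vector not equal to (C,...,C), the indicator of whether at least one node of each type transmitted is uniquely recoverable. -/
/-- Possible outcomes of a slot in step 1 of HSRC-M1: empty, symbol α, symbol β, collision. -/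
inductive Outcome
  | E | A | B | C
  deriving DecidableEq

/-- The outcome of slot `j` of a block in step 1 of HSRC-M1, given that `a 1` type-1 nodes
(each sending symbol α in every slot) and `a (j+1)` type-(j+1) nodes (each sending symbol β
in slot `j` only) transmitted in the block. -/
def slotOutcome (a : ℕ → ℕ) (j : ℕ) : Outcome :=
  if a 1 = 0 ∧ a (j + 1) = 0 then Outcome.E
  else if a 1 = 1 ∧ a (j + 1) = 0 then Outcome.A
  else if a 1 = 0 ∧ a (j + 1) = 1 then Outcome.B
  else Outcome.C

lemma firstEq (a a' : ℕ → ℕ) (j : ℕ) (h : slotOutcome a j = slotOutcome a' j)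
    (hC : slotOutcome a j ≠ Outcome.C) : a 1 = a' 1 ∧ a 1 ≤ 1 := by
  unfold slotOutcome at h hC
  split_ifs at h hC <;> simp_all <;> omega

lemma key (a a' : ℕ → ℕ) (j : ℕ) (h1 : a 1 = a' 1) (h1' : a 1 ≤ 1)
    (h : slotOutcome a j = slotOutcome a' j) : 1 ≤ a (j + 1) ↔ 1 ≤ a' (j + 1) := by
  unfold slotOutcome at h
  split_ifs at h <;> simp_all <;> omega

/-- If the outcome vector of a block of step 1 of HSRC-M1 is not all-collision, then the set
of types that transmitted in the block (i.e. the booleans `a b ≥ 1`, `b = 1,...,T`) is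
uniquely determined by the outcome vector. -/
theorem stmt_18 (T : ℕ) (hT : 2 ≤ T) (a a' : ℕ → ℕ)
    (hsame : ∀ j ∈ Finset.Icc 1 (T - 1), slotOutcome a j = slotOutcome a' j)
    (hnotallC : ∃ j ∈ Finset.Icc 1 (T - 1), slotOutcome a j ≠ Outcome.C) :
    ∀ b ∈ Finset.Icc 1 T, (1 ≤ a b ↔ 1 ≤ a' b) := by
  obtain ⟨j0, hj0, hC⟩ := hnotallC
  obtain ⟨h1, h1le⟩ := firstEq a a' j0 (hsame j0 hj0) hC
  intro b hb
  simp only [Finset.mem_Icc] at hb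
  rcases eq_or_lt_of_le hb.1 with hb1 | hb2
  · rw [← hb1]; omega
  · have hj : b - 1 ∈ Finset.Icc 1 (T - 1) := by
      simp only [Finset.mem_Icc]; omega
    have := key a a' (b - 1) h1 h1le (hsame _ hj)
    rwa [Nat.sub_add_cancel (by omega : 1 ≤ b)] at this
end
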